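/- Let M ∈ ℝ^{p×q} with singular values σ₁(M), …, σ_{min(p,q)}(M). Then the squared Frobenius distance from M to the unit spectral-norm ball is min_{W ∈ ℝ^{p×q}, ‖W‖₂ ≤ 1} ‖M − W‖_F² = Σᵢ max(σᵢ(M) − 1, 0)², and the minimum is attained at W = U min(Σ, 1) Vᵀ, where M = U Σ Vᵀ is a singular value decomposition of M and min(Σ, 1) replaces each singular value σᵢ by min(σᵢ, 1). -/

import Mathlib

open Polynomial


open Matrix

/-- The singular values of a real `p × q` matrix: the nonnegative square roots of the
eigenvalues of the positive semidefinite matrix `Mᵀ M` (indexed by columns). -/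
noncomputable def singVals {p q : ℕ} (M : Matrix (Fin p) (Fin q) ℝ) : Fin q → ℝ :=
  fun i => Real.sqrt ((Matrix.isHermitian_iff_isSymm.mpr
    (by simp [Matrix.IsSymm, Matrix.transpose_mul]) : (Mᵀ * M).IsHermitian).eigenvalues i)

/-- The spectral norm: the largest singular value. -/
noncomputable def specNorm {p q : ℕ} (M : Matrix (Fin p) (Fin q) ℝ) : ℝ :=
  ⨆ i, singVals M i

/-- The squared Frobenius norm. -/
def frobSq {a b : ℕ} (A : Matrix (Fin a) (Fin b) ℝ) : ℝ :=
  ∑ i, ∑ j, (A i j) ^ 2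

lemma charpoly_conj {n : ℕ} (Q A : Matrix (Fin n) (Fin n) ℝ) (h1 : Q * Qᵀ = 1) :
    (Q * A * Qᵀ).charpoly = A.charpoly := by
  have key : charmatrix (Q * A * Qᵀ) =
      C.mapMatrix Q * charmatrix A * C.mapMatrix Qᵀ := by
    rw [charmatrix, charmatrix, _root_.map_mul, _root_.map_mul, mul_sub, sub_mul]
    congr 1
    have hdiag : (Matrix.diagonal (fun _ : Fin n => (X : ℝ[X])))
        = (X : ℝ[X]) • (1 : Matrix (Fin n) (Fin n) ℝ[X]) := by
      ext i j
      by_cases h : i = j <;> simp [Matrix.diagonal_apply, Matrix.one_apply, h]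
    simp only [scalar_apply]
    rw [hdiag, mul_smul_comm, smul_mul_assoc, mul_one,
      ← _root_.map_mul, h1, _root_.map_one]
  have h3 : (C.mapMatrix Q).det * (C.mapMatrix Qᵀ).det = 1 := by
    rw [← det_mul, ← _root_.map_mul, h1, _root_.map_one, det_one]
  rw [Matrix.charpoly, Matrix.charpoly, key, det_mul, det_mul, mul_right_comm, h3, one_mul]

lemma charpoly_diag {n : ℕ} (e : Fin n → ℝ) :
    (Matrix.diagonal e).charpoly = ∏ i, (X - C (e i)) := by
  rw [Matrix.charpoly_of_upperTriangular _ (Matrix.blockTriangular_diagonal e)]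
  simp

lemma roots_prod_lin {n : ℕ} (f : Fin n → ℝ) :
    (∏ i, (X - C (f i))).roots = Multiset.map f Finset.univ.val := by
  have : (∏ i, (X - C (f i)))
      = ((Finset.univ.val.map f).map fun a => X - C a).prod := by
    rw [Multiset.map_map]; rfl
  rw [this, Polynomial.roots_multiset_prod_X_sub_C]

lemma real_spectral {n : ℕ} (A : Matrix (Fin n) (Fin n) ℝ) (hA : A.IsHermitian) :
    ∃ P : Matrix (Fin n) (Fin n) ℝ, P * Pᵀ = 1 ∧
      A = P * Matrix.diagonal hA.eigenvalues * Pᵀ := by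
  refine ⟨(hA.eigenvectorUnitary : Matrix (Fin n) (Fin n) ℝ), ?_, ?_⟩
  · have := (Matrix.mem_unitaryGroup_iff).mp hA.eigenvectorUnitary.2
    simpa [Matrix.star_eq_conjTranspose, Matrix.conjTranspose_eq_transpose_of_trivial] using this
  · have := hA.spectral_theorem
    simpa [Matrix.star_eq_conjTranspose, Matrix.conjTranspose_eq_transpose_of_trivial] using this

lemma eig_multiset {n : ℕ} (A : Matrix (Fin n) (Fin n) ℝ) (hA : A.IsHermitian)
    (Q : Matrix (Fin n) (Fin n) ℝ) (e : Fin n → ℝ)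
    (hQ : Q * Qᵀ = 1) (hAQ : A = Q * Matrix.diagonal e * Qᵀ) :
    Multiset.map hA.eigenvalues Finset.univ.val = Multiset.map e Finset.univ.val := by
  obtain ⟨P, hP, hSpec⟩ := real_spectral A hA
  have h1 : A.charpoly = ∏ i, (X - C (e i)) := by
    rw [hAQ, charpoly_conj _ _ hQ, charpoly_diag]
  have h2 : A.charpoly = ∏ i, (X - C (hA.eigenvalues i)) := by
    conv_lhs => rw [hSpec]
    rw [charpoly_conj _ _ hP, charpoly_diag]
  have := congrArg Polynomial.roots (h2.symm.trans h1)
  rwa [roots_prod_lin, roots_prod_lin] at this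

section helpers
lemma eig_sum_congr {n : ℕ} (e₁ e₂ : Fin n → ℝ)
    (h : Multiset.map e₁ Finset.univ.val = Multiset.map e₂ Finset.univ.val)
    (f : ℝ → ℝ) : ∑ i, f (e₁ i) = ∑ i, f (e₂ i) := by
  have h1 : ∑ i, f (e₁ i) = ((Finset.univ.val.map e₁).map f).sum := by
    rw [Multiset.map_map]; rfl
  have h2 : ∑ i, f (e₂ i) = ((Finset.univ.val.map e₂).map f).sum := by
    rw [Multiset.map_map]; rfl
  rw [h1, h2, h]

lemma eig_mem {n : ℕ} (e₁ e₂ : Fin n → ℝ)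
    (h : Multiset.map e₁ Finset.univ.val = Multiset.map e₂ Finset.univ.val)
    (i : Fin n) : ∃ j, e₁ i = e₂ j := by
  have : e₁ i ∈ Multiset.map e₂ Finset.univ.val := by
    rw [← h]; exact Multiset.mem_map_of_mem _ (Finset.mem_univ i)
  obtain ⟨j, _, hj⟩ := Multiset.mem_map.mp this
  exact ⟨j, hj.symm⟩

-- diagLike mul
lemma diagLike_mul {p q : ℕ} (e : ℕ → ℝ) :
    (Matrix.of fun (i : Fin p) (j : Fin q) => if (i:ℕ) = (j:ℕ) then e i else 0)ᵀ *
    (Matrix.of fun (i : Fin p) (j : Fin q) => if (i:ℕ) = (j:ℕ) then e i else 0) =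
    Matrix.diagonal (fun j : Fin q => if (j:ℕ) < p then (e j)^2 else 0) := by
  ext j k
  simp only [mul_apply, transpose_apply, of_apply, diagonal_apply]
  by_cases hjk : j = k
  · subst hjk
    rw [if_pos rfl]
    by_cases hj : (j:ℕ) < p
    · rw [if_pos hj, Finset.sum_eq_single (⟨(j:ℕ), hj⟩ : Fin p)]
      · simp [pow_two]
      · intro i _ hi
        have : (i:ℕ) ≠ (j:ℕ) := fun hc => hi (Fin.ext (by simpa using hc))
        simp [this]
      · simp
    · rw [if_neg hj]
      apply Finset.sum_eq_zero
      intro i _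
      have : (i:ℕ) ≠ (j:ℕ) := by omega
      simp [this]
  · rw [if_neg hjk]
    apply Finset.sum_eq_zero
    intro i _
    by_cases h1 : (i:ℕ) = (j:ℕ)
    · have : (i:ℕ) ≠ (k:ℕ) := fun hc => hjk (Fin.ext (by omega))
      simp [this]
    · simp [h1]

lemma frobSq_diagLike {p q : ℕ} (c : ℕ → ℝ) :
    frobSq (Matrix.of fun (i : Fin p) (j : Fin q) => if (i:ℕ) = (j:ℕ) then c i else 0)
      = ∑ j : Fin q, (if (j:ℕ) < p then c j ^ 2 else 0) := by
  unfold frobSq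
  rw [Finset.sum_comm]
  refine Finset.sum_congr rfl fun j _ => ?_
  by_cases hj : (j:ℕ) < p
  · rw [if_pos hj, Finset.sum_eq_single (⟨(j:ℕ), hj⟩ : Fin p)]
    · simp
    · intro i _ hi
      have : (i:ℕ) ≠ (j:ℕ) := fun hc => hi (Fin.ext (by simpa using hc))
      simp [this]
    · simp
  · rw [if_neg hj]
    apply Finset.sum_eq_zero
    intro i _
    have : (i:ℕ) ≠ (j:ℕ) := by omega
    simp [this]

lemma frobSq_eq_trace {a b : ℕ} (A : Matrix (Fin a) (Fin b) ℝ) :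
    frobSq A = Matrix.trace (Aᵀ * A) := by
  unfold frobSq Matrix.trace
  rw [Finset.sum_comm]
  refine Finset.sum_congr rfl fun j _ => ?_
  simp [Matrix.diag, mul_apply, pow_two]


lemma sandwich {p q : ℕ} (U : Matrix (Fin p) (Fin p) ℝ) (V : Matrix (Fin q) (Fin q) ℝ)
    (A : Matrix (Fin p) (Fin q) ℝ) (hU : Uᵀ * U = 1) :
    (U * A * Vᵀ)ᵀ * (U * A * Vᵀ) = V * (Aᵀ * A) * Vᵀ := by
  simp only [transpose_mul, transpose_transpose]
  calc V * (Aᵀ * Uᵀ) * (U * A * Vᵀ) = V * (Aᵀ * ((Uᵀ * U) * (A * Vᵀ))) := by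
        simp only [Matrix.mul_assoc]
    _ = V * (Aᵀ * A) * Vᵀ := by rw [hU, Matrix.one_mul]; simp only [Matrix.mul_assoc]

lemma conj_entry {n : ℕ} (B V : Matrix (Fin n) (Fin n) ℝ) (j : Fin n) :
    (Vᵀ * B * V) j j = (fun a => V a j) ⬝ᵥ B *ᵥ (fun a => V a j) := by
  simp only [mul_apply, transpose_apply, dotProduct, mulVec, Finset.sum_mul]
  rw [Finset.sum_comm]
  refine Finset.sum_congr rfl fun a _ => ?_
  rw [Finset.mul_sum]
  refine Finset.sum_congr rfl fun b _ => ?_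
  ring

lemma sub_min_one (a : ℝ) : a - min a 1 = max (a - 1) 0 := by
  rcases le_total a 1 with h | h
  · rw [min_eq_left h, max_eq_right (by linarith)]; ring
  · rw [min_eq_right h, max_eq_left (by linarith)]

lemma key_ineq (a w : ℝ) (ha : 0 ≤ a) (hw : w ^ 2 ≤ 1) :
    max (a - 1) 0 ^ 2 ≤ (a - w) ^ 2 := by
  rcases le_total a 1 with h | h
  · rw [max_eq_right (by linarith)]; simpa using sq_nonneg (a - w)
  · rw [max_eq_left (by linarith)]; nlinarith

lemma frobSq_conj {p q : ℕ} (U : Matrix (Fin p) (Fin p) ℝ) (V : Matrix (Fin q) (Fin q) ℝ)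
    (A : Matrix (Fin p) (Fin q) ℝ) (hU : Uᵀ * U = 1) (hV : Vᵀ * V = 1) :
    frobSq (U * A * Vᵀ) = frobSq A := by
  rw [frobSq_eq_trace, frobSq_eq_trace]
  have : (U * A * Vᵀ)ᵀ * (U * A * Vᵀ) = V * (Aᵀ * A) * Vᵀ := by
    simp only [transpose_mul, transpose_transpose]
    calc V * (Aᵀ * Uᵀ) * (U * A * Vᵀ) = V * (Aᵀ * ((Uᵀ * U) * (A * Vᵀ))) := by
          simp only [Matrix.mul_assoc]
      _ = V * (Aᵀ * A) * Vᵀ := by rw [hU, Matrix.one_mul]; simp only [Matrix.mul_assoc]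
  rw [this, Matrix.trace_mul_cycle, hV, one_mul]

lemma quad_le {n : ℕ} (B : Matrix (Fin n) (Fin n) ℝ) (hB : B.IsHermitian)
    (h1 : ∀ i, hB.eigenvalues i ≤ 1) (v : Fin n → ℝ) :
    v ⬝ᵥ B *ᵥ v ≤ v ⬝ᵥ v := by
  obtain ⟨P, hP, hSpec⟩ := real_spectral B hB
  have key : v ⬝ᵥ B *ᵥ v = (Pᵀ *ᵥ v) ⬝ᵥ (Matrix.diagonal hB.eigenvalues *ᵥ (Pᵀ *ᵥ v)) := by
    conv_lhs => rw [hSpec]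
    rw [← Matrix.mulVec_mulVec, ← Matrix.mulVec_mulVec, Matrix.dotProduct_mulVec v P,
      ← Matrix.mulVec_transpose, Matrix.dotProduct_mulVec, ← Matrix.mulVec_transpose]
  set w := Pᵀ *ᵥ v with hw
  have key2 : w ⬝ᵥ w = v ⬝ᵥ v := by
    rw [hw, Matrix.dotProduct_mulVec, ← Matrix.mulVec_transpose, Matrix.mulVec_mulVec,
      transpose_transpose, hP, Matrix.one_mulVec]
  rw [key, ← key2]
  simp only [dotProduct, Matrix.mulVec_diagonal]
  apply Finset.sum_le_sum
  intro i _
  have := h1 i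
  nlinarith [sq_nonneg (w i), hB.eigenvalues i]
end helpers

/-- Projection onto the unit spectral-norm ball: given an SVD `M = U Σ Vᵀ`, the minimum of
`‖M − W‖_F²` over `‖W‖₂ ≤ 1` equals `Σᵢ max(σᵢ(M) − 1, 0)²`, attained at
`W = U min(Σ,1) Vᵀ` (clipping each singular value at `1`). -/
theorem dist_to_spectral_ball (p q : ℕ)
    (M : Matrix (Fin p) (Fin q) ℝ)
    (U : Matrix (Fin p) (Fin p) ℝ) (V : Matrix (Fin q) (Fin q) ℝ)
    (d : ℕ → ℝ) (hd : ∀ i, 0 ≤ d i)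
    (hUo₁ : Uᵀ * U = 1) (hUo₂ : U * Uᵀ = 1)
    (hVo₁ : Vᵀ * V = 1) (hVo₂ : V * Vᵀ = 1)
    (hSVD : M = U * (Matrix.of fun (i : Fin p) (j : Fin q) =>
        if (i : ℕ) = (j : ℕ) then d i else 0) * Vᵀ) :
    specNorm (U * (Matrix.of fun (i : Fin p) (j : Fin q) =>
        if (i : ℕ) = (j : ℕ) then min (d i) 1 else 0) * Vᵀ) ≤ 1 ∧
    frobSq (M - U * (Matrix.of fun (i : Fin p) (j : Fin q) =>
        if (i : ℕ) = (j : ℕ) then min (d i) 1 else 0) * Vᵀ)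
      = ∑ i, max (singVals M i - 1) 0 ^ 2 ∧
    ∀ W : Matrix (Fin p) (Fin q) ℝ, specNorm W ≤ 1 →
      frobSq (M - U * (Matrix.of fun (i : Fin p) (j : Fin q) =>
          if (i : ℕ) = (j : ℕ) then min (d i) 1 else 0) * Vᵀ)
        ≤ frobSq (M - W) := by
  set D : Matrix (Fin p) (Fin q) ℝ :=
    Matrix.of fun (i : Fin p) (j : Fin q) => if (i : ℕ) = (j : ℕ) then d i else 0 with hD
  set Dc : Matrix (Fin p) (Fin q) ℝ :=
    Matrix.of fun (i : Fin p) (j : Fin q) => if (i : ℕ) = (j : ℕ) then min (d i) 1 else 0 with hDc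
  -- eigenvalues of MᵀM
  have hMtM : Mᵀ * M = V * Matrix.diagonal
      (fun j : Fin q => if (j : ℕ) < p then (d j) ^ 2 else 0) * Vᵀ := by
    rw [hSVD, sandwich U V D hUo₁, hD, diagLike_mul]
  have hmsM := eig_multiset (Mᵀ * M) (Matrix.isHermitian_iff_isSymm.mpr (by simp [Matrix.IsSymm, Matrix.transpose_mul]) : (Mᵀ * M).IsHermitian) V _ hVo₂ hMtM
  -- eigenvalues of DcᵀDc conjugated
  have hCtC : (U * Dc * Vᵀ)ᵀ * (U * Dc * Vᵀ) = V * Matrix.diagonal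
      (fun j : Fin q => if (j : ℕ) < p then (min (d (j : ℕ)) 1) ^ 2 else 0) * Vᵀ := by
    rw [sandwich U V Dc hUo₁, hDc, diagLike_mul (fun n => min (d n) 1)]
  have hmsC := eig_multiset ((U * Dc * Vᵀ)ᵀ * (U * Dc * Vᵀ))
    (Matrix.isHermitian_iff_isSymm.mpr (by simp [Matrix.IsSymm, Matrix.transpose_mul]) : ((U * Dc * Vᵀ)ᵀ * (U * Dc * Vᵀ)).IsHermitian) V _ hVo₂ hCtC
  -- Part 1
  have part1 : specNorm (U * Dc * Vᵀ) ≤ 1 := by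
    apply Real.iSup_le _ zero_le_one
    intro i
    obtain ⟨j, hj⟩ := eig_mem _ _ hmsC i
    show Real.sqrt _ ≤ 1
    rw [hj, Real.sqrt_le_one]
    by_cases hjp : (j : ℕ) < p
    · rw [if_pos hjp]
      have h0 : 0 ≤ min (d (j : ℕ)) 1 := le_min (hd _) zero_le_one
      have h1 : min (d (j : ℕ)) 1 ≤ 1 := min_le_right _ _
      nlinarith
    · rw [if_neg hjp]; exact zero_le_one
  -- Part 2
  have hsub : M - U * Dc * Vᵀ = U * (D - Dc) * Vᵀ := by
    rw [hSVD, Matrix.mul_sub, Matrix.sub_mul]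
  have hDDc : D - Dc = Matrix.of fun (i : Fin p) (j : Fin q) =>
      if (i : ℕ) = (j : ℕ) then max (d i - 1) 0 else 0 := by
    ext i j
    by_cases h : (i : ℕ) = (j : ℕ)
    · simp [hD, hDc, h, sub_min_one]
    · simp [hD, hDc, h]
  have hfrob_opt : frobSq (M - U * Dc * Vᵀ)
      = ∑ j : Fin q, (if (j : ℕ) < p then max (d (j : ℕ) - 1) 0 ^ 2 else 0) := by
    rw [hsub, frobSq_conj U V _ hUo₁ hVo₁, hDDc, frobSq_diagLike (fun n => max (d n - 1) 0)]
  have hsum : ∑ i, max (singVals M i - 1) 0 ^ 2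
      = ∑ j : Fin q, (if (j : ℕ) < p then max (d (j : ℕ) - 1) 0 ^ 2 else 0) := by
    have h1 : ∑ i, max (singVals M i - 1) 0 ^ 2
        = ∑ i, (fun x => max (Real.sqrt x - 1) 0 ^ 2)
            ((Matrix.isHermitian_iff_isSymm.mpr (by simp [Matrix.IsSymm, Matrix.transpose_mul]) : (Mᵀ * M).IsHermitian).eigenvalues i) := rfl
    rw [h1, eig_sum_congr _ _ hmsM (fun x => max (Real.sqrt x - 1) 0 ^ 2)]
    refine Finset.sum_congr rfl fun j _ => ?_
    by_cases hjp : (j : ℕ) < p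
    · simp only [if_pos hjp, Real.sqrt_sq (hd (j : ℕ))]
    · simp only [if_neg hjp, Real.sqrt_zero]
      norm_num
  refine ⟨part1, hfrob_opt.trans hsum.symm, ?_⟩
  -- Part 3
  intro W hW
  rcases Nat.eq_zero_or_pos q with hq | hq
  · subst hq
    simp [frobSq]
  haveI : Nonempty (Fin q) := ⟨⟨0, hq⟩⟩
  have hB := (Matrix.isHermitian_iff_isSymm.mpr (by simp [Matrix.IsSymm, Matrix.transpose_mul]) : (Wᵀ * W).IsHermitian)
  have heig1 : ∀ k, hB.eigenvalues k ≤ 1 := by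
    intro k
    have h1 : singVals W k ≤ specNorm W :=
      le_ciSup ((Set.finite_range _).bddAbove) k
    have h2 : Real.sqrt (hB.eigenvalues k) ≤ 1 := le_trans h1 hW
    exact Real.sqrt_le_one.mp h2
  set W' := Uᵀ * W * V with hW'
  have hdiagW' : ∀ (i : Fin p) (j : Fin q), (i : ℕ) = (j : ℕ) → (W' i j) ^ 2 ≤ 1 := by
    intro i j hij
    have hWW : W'ᵀ * W' = Vᵀ * (Wᵀ * W) * V := by
      have := sandwich Uᵀ Vᵀ W (by rw [transpose_transpose]; exact hUo₂)
      rw [transpose_transpose] at this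
      rw [hW', this]
    have hvv : (fun a => V a j) ⬝ᵥ (fun a => V a j) = 1 := by
      have h := congrFun (congrFun hVo₁ j) j
      simp only [mul_apply, transpose_apply, Matrix.one_apply_eq] at h
      simpa [dotProduct] using h
    have hquad : (W'ᵀ * W') j j ≤ 1 := by
      rw [hWW, conj_entry]
      calc (fun a => V a j) ⬝ᵥ (Wᵀ * W) *ᵥ (fun a => V a j)
          ≤ (fun a => V a j) ⬝ᵥ (fun a => V a j) := quad_le _ hB heig1 _
        _ = 1 := hvv
    have hentry : (W' i j) ^ 2 ≤ (W'ᵀ * W') j j := by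
      have : (W'ᵀ * W') j j = ∑ a, (W' a j) ^ 2 := by
        simp [mul_apply, pow_two]
      rw [this]
      exact Finset.single_le_sum (f := fun a => (W' a j) ^ 2)
        (fun a _ => sq_nonneg _) (Finset.mem_univ i)
    exact le_trans hentry hquad
  have hMW : M - W = U * (D - W') * Vᵀ := by
    rw [hSVD, Matrix.mul_sub, Matrix.sub_mul]
    congr 1
    symm
    calc U * (Uᵀ * W * V) * Vᵀ = (U * Uᵀ) * (W * (V * Vᵀ)) := by
          simp only [Matrix.mul_assoc]
      _ = W := by rw [hUo₂, hVo₂, Matrix.one_mul, Matrix.mul_one]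
  have hfinal : frobSq (M - U * Dc * Vᵀ) ≤ frobSq (D - W') := by
    rw [hsub, frobSq_conj U V _ hUo₁ hVo₁, hDDc]
    unfold frobSq
    refine Finset.sum_le_sum fun i _ => Finset.sum_le_sum fun j _ => ?_
    by_cases h : (i : ℕ) = (j : ℕ)
    · have hDij : (D - W') i j = d i - W' i j := by simp [hD, h]
      rw [hDij]
      simpa [h] using key_ineq (d (i : ℕ)) (W' i j) (hd _) (hdiagW' i j h)
    · simp only [Matrix.of_apply, if_neg h]
      simpa using sq_nonneg ((D - W') i j)
  rw [hMW, frobSq_conj U V _ hUo₁ hVo₁]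
  exact hfinal
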